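/- There exists a constant C > 0 such that for all ν > 0, all t ≥ 1 and all reals η, ξ, one has D(t,ξ) ≤ C·⟨η−ξ⟩³·D(t,η). -/
import Mathlib


/-- Japanese bracket `⟨x⟩ = (1+x²)^{1/2}`. -/
noncomputable def jap (x : ℝ) : ℝ := Real.sqrt (1 + x ^ 2)

/-- The enhanced-dissipation multiplier
`D(t,η) = (1/3)ν|η|³ + (1/24)ν(t³ − 8|η|³)₊`. -/
noncomputable def Dmul (ν t η : ℝ) : ℝ :=
  (1/3) * ν * |η| ^ 3 + (1/24) * ν * max (t ^ 3 - 8 * |η| ^ 3) 0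

lemma jap_ge_one (x : ℝ) : 1 ≤ jap x := by
  unfold jap
  nlinarith [Real.sq_sqrt (show (0:ℝ) ≤ 1 + x ^ 2 by positivity),
    Real.sqrt_nonneg (1 + x ^ 2), sq_nonneg x]

lemma abs_le_jap (x : ℝ) : |x| ≤ jap x := by
  unfold jap
  rw [show |x| = Real.sqrt (x ^ 2) by rw [Real.sqrt_sq_eq_abs]]
  exact Real.sqrt_le_sqrt (by linarith)

set_option maxHeartbeats 1000000 in
/-- there exists `C > 0` such that for all `ν > 0`, all `t ≥ 1` and all
reals `η, ξ`, `D(t,ξ) ≤ C·⟨η−ξ⟩³·D(t,η)`. -/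
theorem stmt6 :
    ∃ C : ℝ, 0 < C ∧
      ∀ ν t η ξ : ℝ, 0 < ν → 1 ≤ t →
        Dmul ν t ξ ≤ C * (jap (η - ξ)) ^ 3 * Dmul ν t η := by
  refine ⟨40, by norm_num, fun ν t η ξ hν ht => ?_⟩
  have hJ1 : 1 ≤ jap (η - ξ) := jap_ge_one _
  have hJx : |η - ξ| ≤ jap (η - ξ) := abs_le_jap _
  have hax : (0:ℝ) ≤ |η - ξ| := abs_nonneg _
  have haη : (0:ℝ) ≤ |η| := abs_nonneg _
  have haξ : (0:ℝ) ≤ |ξ| := abs_nonneg _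
  have ht3 : (1:ℝ) ≤ t ^ 3 := one_le_pow₀ ht
  -- lower bound: D(t,η) ≥ ν t³/24
  have hmη : t ^ 3 - 8 * |η| ^ 3 ≤ max (t ^ 3 - 8 * |η| ^ 3) 0 := le_max_left _ _
  have hmη0 : (0:ℝ) ≤ max (t ^ 3 - 8 * |η| ^ 3) 0 := le_max_right _ _
  have hD1 : ν * t ^ 3 / 24 ≤ Dmul ν t η := by
    unfold Dmul; nlinarith
  have hD2 : (1/3) * ν * |η| ^ 3 ≤ Dmul ν t η := by
    unfold Dmul; nlinarith
  -- upper bound on D(t,ξ)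
  have hmξ : max (t ^ 3 - 8 * |ξ| ^ 3) 0 ≤ t ^ 3 := by
    apply max_le <;> nlinarith [pow_nonneg (abs_nonneg ξ) 3]
  have hDξ : Dmul ν t ξ ≤ (1/3) * ν * |ξ| ^ 3 + (1/24) * ν * t ^ 3 := by
    unfold Dmul; nlinarith
  -- triangle inequality cubed
  have htri : |ξ| ≤ |η| + |η - ξ| := by
    calc |ξ| = |η - (η - ξ)| := by ring_nf
    _ ≤ |η| + |η - ξ| := abs_sub _ _
  have hcube : |ξ| ^ 3 ≤ 4 * |η| ^ 3 + 4 * |η - ξ| ^ 3 := by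
    nlinarith [sq_nonneg (|η| - |η - ξ|), sq_nonneg (|η| + |η - ξ|),
      mul_nonneg haη hax, pow_le_pow_left₀ haξ htri 3]
  -- |η-ξ|³ ≤ J³
  have hJx3 : |η - ξ| ^ 3 ≤ (jap (η - ξ)) ^ 3 := pow_le_pow_left₀ hax hJx 3
  have hJ13 : 1 ≤ (jap (η - ξ)) ^ 3 := one_le_pow₀ hJ1
  have hνt : ν ≤ 24 * Dmul ν t η := by nlinarith
  have hD0 : 0 ≤ Dmul ν t η := by nlinarith
  calc Dmul ν t ξ ≤ (1/3) * ν * |ξ| ^ 3 + (1/24) * ν * t ^ 3 := hDξ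
    _ ≤ (1/3) * ν * (4 * |η| ^ 3 + 4 * |η - ξ| ^ 3) + Dmul ν t η := by nlinarith
    _ = 4 * ((1/3) * ν * |η| ^ 3) + (4/3) * (ν * |η - ξ| ^ 3) + Dmul ν t η := by ring
    _ ≤ 4 * Dmul ν t η + (4/3) * (24 * Dmul ν t η * (jap (η - ξ)) ^ 3) + Dmul ν t η := by
        have h1 : ν * |η - ξ| ^ 3 ≤ 24 * Dmul ν t η * (jap (η - ξ)) ^ 3 := by
          calc ν * |η - ξ| ^ 3 ≤ ν * (jap (η - ξ)) ^ 3 := by nlinarith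
          _ ≤ 24 * Dmul ν t η * (jap (η - ξ)) ^ 3 := by nlinarith
        nlinarith
    _ ≤ 40 * (jap (η - ξ)) ^ 3 * Dmul ν t η := by nlinarith
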